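/- arXiv:hep-th/0010043 — 2 statements merged into one kernel-verified Lean document; each statement's English description precedes it below -/
import Mathlib

section
/- Let ε¹, ε², T, W : ℝ → ℂ be C^∞, write ∂ for d/dx, and set K := ∂²ε² − T·ε². Let A be the 3×3 matrix-valued function with A₁₂ = 1, A₂₃ = 1, A₃₁ = W, A₃₂ = T and all other entries 0, and let X be the 3×3 matrix-valued function with entries X₁₁ = (2/3)K − ∂ε¹, X₁₂ = ε¹ − ∂ε², X₁₃ = ε², X₂₁ = (2/3)∂K − ∂²ε¹ + W·ε², X₂₂ = −(1/3)K, X₂₃ = ε¹, X₃₁ = (2/3)∂²K − ∂³ε¹ + ∂(W·ε²) + W·ε¹, X₃₂ = (1/3)∂K − ∂²ε¹ + W·ε² + T·ε¹, X₃₃ = −(1/3)K + ∂ε¹. Then: (a) trace X = 0; (b) the matrix ∂X − (A·X − X·A) has all entries zero except the (3,1) and (3,2) entries; (c) its (3,2) entry equals δ^{(1)}_{ε¹}T + δ^{(2)}_{ε²}T and its (3,1) entry equals δ^{(1)}_{ε¹}W + δ^{(2)}_{ε²}W, where δ^{(1)}_ε T = −2∂³ε + 2T·∂ε + ε·∂T,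 δ^{(1)}_ε W = −∂⁴ε + 3W·∂ε + ε·∂W + T·∂²ε, δ^{(2)}_ε T = ∂⁴ε − T·∂²ε + (3W − 2∂T)·∂ε + (2∂W − ∂²T)·ε, δ^{(2)}_ε W = (2/3)∂⁵ε − (4/3)T·∂³ε − 2(∂T)·∂²ε + ((2/3)T² − 2∂²T + 2∂W)·∂ε + (∂²W − (2/3)∂³T + (2/3)T·∂T)·ε. -/
lemma aux_cd_deriv {f : ℝ → ℂ} (hf : ContDiff ℝ (⊤ : ℕ∞) f) : ContDiff ℝ (⊤ : ℕ∞) (deriv f) := by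
  have h : ContDiff ℝ (((⊤ : ℕ∞) : WithTop ℕ∞) + 1) f := by
    rwa [show ((⊤ : ℕ∞) : WithTop ℕ∞) + 1 = ((⊤ : ℕ∞) : WithTop ℕ∞) by
      rw [← WithTop.coe_one, ← WithTop.coe_add, top_add]]
  exact (contDiff_succ_iff_deriv.mp h).2.2

lemma aux_hda {f : ℝ → ℂ} (hf : ContDiff ℝ (⊤ : ℕ∞) f) (x : ℝ) : HasDerivAt f (deriv f x) x :=
  (hf.differentiable (by simp) x).hasDerivAt

lemma aux_it2 (f : ℝ → ℂ) : iteratedDeriv 2 f = deriv (deriv f) := by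
  rw [show (2:ℕ) = 1+1 from rfl, iteratedDeriv_succ, iteratedDeriv_one]
lemma aux_it3 (f : ℝ → ℂ) : iteratedDeriv 3 f = deriv (deriv (deriv f)) := by
  rw [show (3:ℕ) = 2+1 from rfl, iteratedDeriv_succ, aux_it2]
lemma aux_it4 (f : ℝ → ℂ) : iteratedDeriv 4 f = deriv (deriv (deriv (deriv f))) := by
  rw [show (4:ℕ) = 3+1 from rfl, iteratedDeriv_succ, aux_it3]
lemma aux_it5 (f : ℝ → ℂ) : iteratedDeriv 5 f = deriv (deriv (deriv (deriv (deriv f)))) := by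
  rw [show (5:ℕ) = 4+1 from rfl, iteratedDeriv_succ, aux_it4]


/-- `δ^{(1)}_ε T = −2∂³ε + 2T·∂ε + ε·∂T`. -/
noncomputable def delta1T (ε T : ℝ → ℂ) : ℝ → ℂ := fun x =>
  -2 * iteratedDeriv 3 ε x + 2 * T x * deriv ε x + ε x * deriv T x

/-- `δ^{(1)}_ε W = −∂⁴ε + 3W·∂ε + ε·∂W + T·∂²ε`. -/
noncomputable def delta1W (ε T W : ℝ → ℂ) : ℝ → ℂ := fun x =>
  -iteratedDeriv 4 ε x + 3 * W x * deriv ε x + ε x * deriv W x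
    + T x * iteratedDeriv 2 ε x

/-- `δ^{(2)}_ε T = ∂⁴ε − T·∂²ε + (3W − 2∂T)·∂ε + (2∂W − ∂²T)·ε`. -/
noncomputable def delta2T (ε T W : ℝ → ℂ) : ℝ → ℂ := fun x =>
  iteratedDeriv 4 ε x - T x * iteratedDeriv 2 ε x
    + (3 * W x - 2 * deriv T x) * deriv ε x
    + (2 * deriv W x - iteratedDeriv 2 T x) * ε x

/-- `δ^{(2)}_ε W = (2/3)∂⁵ε − (4/3)T·∂³ε − 2(∂T)·∂²ε
  + ((2/3)T² − 2∂²T + 2∂W)·∂ε + (∂²W − (2/3)∂³T + (2/3)T·∂T)·ε`. -/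
noncomputable def delta2W (ε T W : ℝ → ℂ) : ℝ → ℂ := fun x =>
  (2 / 3) * iteratedDeriv 5 ε x - (4 / 3) * T x * iteratedDeriv 3 ε x
    - 2 * deriv T x * iteratedDeriv 2 ε x
    + ((2 / 3) * T x ^ 2 - 2 * iteratedDeriv 2 T x + 2 * deriv W x) * deriv ε x
    + (iteratedDeriv 2 W x - (2 / 3) * iteratedDeriv 3 T x
        + (2 / 3) * T x * deriv T x) * ε x

/-- Entrywise derivative of a matrix-valued function on `ℝ`. -/
noncomputable def matDeriv (M : ℝ → Matrix (Fin 3) (Fin 3) ℂ) :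
    ℝ → Matrix (Fin 3) (Fin 3) ℂ :=
  fun x => Matrix.of fun i j => deriv (fun y => M y i j) x

/-- The infinitesimal automorphism equation for `SL(3,ℂ)`-opers: the traceless
matrix `X` built from the two free functions `ε¹, ε²` satisfies
`∂X − [A,X] = ` (variation of the oper), i.e. all entries of `∂X − [A,X]`
vanish except the `(3,1)` and `(3,2)` ones, which give the anchor maps
`δ^{(1)} + δ^{(2)}` applied to `W` and `T` respectively. -/
theorem oper_infinitesimal_automorphism_matrix
    (ε1 ε2 T W K : ℝ → ℂ)
    (hε1 : ContDiff ℝ (⊤ : ℕ∞) ε1) (hε2 : ContDiff ℝ (⊤ : ℕ∞) ε2)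
    (hT : ContDiff ℝ (⊤ : ℕ∞) T) (hW : ContDiff ℝ (⊤ : ℕ∞) W)
    (hK : ∀ x, K x = iteratedDeriv 2 ε2 x - T x * ε2 x)
    (A X : ℝ → Matrix (Fin 3) (Fin 3) ℂ)
    (hA : ∀ x, A x = !![0, 1, 0; 0, 0, 1; W x, T x, 0])
    (hX : ∀ x, X x =
      !![(2 / 3) * K x - deriv ε1 x,
         ε1 x - deriv ε2 x,
         ε2 x;
         (2 / 3) * deriv K x - iteratedDeriv 2 ε1 x + W x * ε2 x,
         -(1 / 3) * K x,
         ε1 x;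
         (2 / 3) * iteratedDeriv 2 K x - iteratedDeriv 3 ε1 x
           + deriv (fun y => W y * ε2 y) x + W x * ε1 x,
         (1 / 3) * deriv K x - iteratedDeriv 2 ε1 x + W x * ε2 x + T x * ε1 x,
         -(1 / 3) * K x + deriv ε1 x]) :
    (∀ x, Matrix.trace (X x) = 0)
    ∧ (∀ (x : ℝ) (i j : Fin 3), ((i, j) : Fin 3 × Fin 3) ≠ (2, 0) →
        ((i, j) : Fin 3 × Fin 3) ≠ (2, 1) →
        (matDeriv X x - (A x * X x - X x * A x)) i j = 0)
    ∧ (∀ x : ℝ,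
        (matDeriv X x - (A x * X x - X x * A x)) 2 1
          = delta1T ε1 T x + delta2T ε2 T W x
        ∧ (matDeriv X x - (A x * X x - X x * A x)) 2 0
          = delta1W ε1 T W x + delta2W ε2 T W x) := by
    -- smoothness of derivatives
  have s1' := aux_cd_deriv hε1
  have s1'' := aux_cd_deriv s1'
  have s1''' := aux_cd_deriv s1''
  have s2' := aux_cd_deriv hε2
  have s2'' := aux_cd_deriv s2'
  have s2''' := aux_cd_deriv s2''
  have s2'''' := aux_cd_deriv s2'''
  have sT' := aux_cd_deriv hT
  have sT'' := aux_cd_deriv sT'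
  have sW' := aux_cd_deriv hW
  -- K as an explicit function, and its smoothness
  have hKf : K = fun x => deriv (deriv ε2) x - T x * ε2 x := by
    funext x; rw [hK x, aux_it2]
  have sK : ContDiff ℝ (⊤ : ℕ∞) K := by rw [hKf]; exact s2''.sub (hT.mul hε2)
  have sK' := aux_cd_deriv sK
  have sK'' := aux_cd_deriv sK'
  -- derivatives of K
  have hK1 : ∀ x, deriv K x
      = deriv (deriv (deriv ε2)) x - (deriv T x * ε2 x + T x * deriv ε2 x) := by
    intro x
    conv_lhs => rw [hKf]
    exact ((aux_hda s2'' x).sub ((aux_hda hT x).mul (aux_hda hε2 x))).deriv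
  have hK1f : deriv K = fun x =>
      deriv (deriv (deriv ε2)) x - (deriv T x * ε2 x + T x * deriv ε2 x) := funext hK1
  have hK2 : ∀ x, deriv (deriv K) x
      = deriv (deriv (deriv (deriv ε2))) x
        - (deriv (deriv T) x * ε2 x + 2 * deriv T x * deriv ε2 x
            + T x * deriv (deriv ε2) x) := by
    intro x
    conv_lhs => rw [hK1f]
    refine (((aux_hda s2''' x).sub
      (((aux_hda sT' x).mul (aux_hda hε2 x)).add
        ((aux_hda hT x).mul (aux_hda s2' x)))).deriv).trans (by ring)
  have hK2f : deriv (deriv K) = fun x =>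
      deriv (deriv (deriv (deriv ε2))) x
        - (deriv (deriv T) x * ε2 x + 2 * deriv T x * deriv ε2 x
            + T x * deriv (deriv ε2) x) := funext hK2
  have hK3 : ∀ x, deriv (deriv (deriv K)) x
      = deriv (deriv (deriv (deriv (deriv ε2)))) x
        - (deriv (deriv (deriv T)) x * ε2 x
            + 3 * deriv (deriv T) x * deriv ε2 x
            + 3 * deriv T x * deriv (deriv ε2) x
            + T x * deriv (deriv (deriv ε2)) x) := by
    intro x
    conv_lhs => rw [hK2f]
    refine (((aux_hda s2'''' x).sub
      ((((aux_hda sT'' x).mul (aux_hda hε2 x)).add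
          ((HasDerivAt.const_mul 2 (aux_hda sT' x)).mul (aux_hda s2' x))).add
        ((aux_hda hT x).mul (aux_hda s2'' x)))).deriv).trans ?_
    ring
  -- derivatives of W·ε2
  have hWe1 : ∀ x, deriv (fun y => W y * ε2 y) x
      = deriv W x * ε2 x + W x * deriv ε2 x := fun x =>
    ((aux_hda hW x).mul (aux_hda hε2 x)).deriv
  have hWe1f : deriv (fun y => W y * ε2 y)
      = fun x => deriv W x * ε2 x + W x * deriv ε2 x := funext hWe1
  have sWe : ContDiff ℝ (⊤ : ℕ∞) (deriv (fun y => W y * ε2 y)) := aux_cd_deriv (hW.mul hε2)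
  have hWe2 : ∀ x, deriv (deriv (fun y => W y * ε2 y)) x
      = deriv (deriv W) x * ε2 x + 2 * deriv W x * deriv ε2 x
        + W x * deriv (deriv ε2) x := by
    intro x
    conv_lhs => rw [hWe1f]
    refine ((((aux_hda sW' x).mul (aux_hda hε2 x)).add
      ((aux_hda hW x).mul (aux_hda s2' x))).deriv).trans (by ring)
  -- the matrix of entry derivatives
  have hMD : ∀ x, matDeriv X x =
      !![(2/3) * deriv K x - deriv (deriv ε1) x,
         deriv ε1 x - deriv (deriv ε2) x,
         deriv ε2 x;
         (2/3) * deriv (deriv K) x - deriv (deriv (deriv ε1)) x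
           + (deriv W x * ε2 x + W x * deriv ε2 x),
         -(1/3) * deriv K x,
         deriv ε1 x;
         (2/3) * deriv (deriv (deriv K)) x - deriv (deriv (deriv (deriv ε1))) x
           + deriv (deriv (fun y => W y * ε2 y)) x
           + (deriv W x * ε1 x + W x * deriv ε1 x),
         (1/3) * deriv (deriv K) x - deriv (deriv (deriv ε1)) x
           + (deriv W x * ε2 x + W x * deriv ε2 x)
           + (deriv T x * ε1 x + T x * deriv ε1 x),
         -(1/3) * deriv K x + deriv (deriv ε1) x] := by
    intro x
    ext i j
    fin_cases i <;> fin_cases j <;>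
      simp [matDeriv]
    · rw [show (fun y => X y 0 0) = fun y => (2/3 : ℂ) * K y - deriv ε1 y from
        funext fun y => by rw [hX y]; simp]
      refine (((aux_hda sK x).const_mul ((2:ℂ)/3)).sub (aux_hda s1' x)).deriv |>.trans ?_
      ring
    · rw [show (fun y => X y 0 1) = fun y => ε1 y - deriv ε2 y from
        funext fun y => by rw [hX y]; simp]
      refine ((aux_hda hε1 x).sub (aux_hda s2' x)).deriv |>.trans ?_
      ring
    · rw [show (fun y => X y 0 2) = ε2 from funext fun y => by rw [hX y]; simp]
    · rw [show (fun y => X y 1 0)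
          = fun y => (2/3 : ℂ) * deriv K y - deriv (deriv ε1) y + W y * ε2 y from
        funext fun y => by rw [hX y]; simp [aux_it2]]
      refine ((((aux_hda sK' x).const_mul ((2:ℂ)/3)).sub (aux_hda s1'' x)).add
        ((aux_hda hW x).mul (aux_hda hε2 x))).deriv |>.trans ?_
      ring
    · rw [show (fun y => X y 1 1) = fun y => (-(1/3) : ℂ) * K y from
        funext fun y => by rw [hX y]; simp]
      refine ((aux_hda sK x).const_mul (-(1/3) : ℂ)).deriv |>.trans ?_
      ring
    · rw [show (fun y => X y 1 2) = ε1 from funext fun y => by rw [hX y]; simp]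
    · rw [show (fun y => X y 2 0)
          = fun y => (2/3 : ℂ) * deriv (deriv K) y - deriv (deriv (deriv ε1)) y
              + deriv (fun z => W z * ε2 z) y + W y * ε1 y from
        funext fun y => by rw [hX y]; simp [aux_it2, aux_it3]]
      refine (((((aux_hda sK'' x).const_mul ((2:ℂ)/3)).sub (aux_hda s1''' x)).add
        (aux_hda sWe x)).add ((aux_hda hW x).mul (aux_hda hε1 x))).deriv |>.trans ?_
      ring
    · rw [show (fun y => X y 2 1)
          = fun y => (1/3 : ℂ) * deriv K y - deriv (deriv ε1) y + W y * ε2 y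
              + T y * ε1 y from
        funext fun y => by rw [hX y]; simp [aux_it2]]
      refine (((((aux_hda sK' x).const_mul ((1:ℂ)/3)).sub (aux_hda s1'' x)).add
        ((aux_hda hW x).mul (aux_hda hε2 x))).add
        ((aux_hda hT x).mul (aux_hda hε1 x))).deriv |>.trans ?_
      ring
    · rw [show (fun y => X y 2 2) = fun y => (-(1/3) : ℂ) * K y + deriv ε1 y from
        funext fun y => by rw [hX y]; simp]
      refine (((aux_hda sK x).const_mul (-(1/3) : ℂ)).add (aux_hda s1' x)).deriv |>.trans ?_
      ring
  have hKx : ∀ x, K x = deriv (deriv ε2) x - T x * ε2 x := fun x => by rw [hK x, aux_it2]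
  refine ⟨?_, ?_, ?_⟩
  · intro x
    rw [Matrix.trace_fin_three, hX x]
    simp
    ring
  · intro x i j h1 h2
    fin_cases i <;> fin_cases j <;>
      (try exact absurd rfl h1) <;> (try exact absurd rfl h2) <;>
      simp only [Matrix.sub_apply, Matrix.mul_apply, Fin.sum_univ_three, hMD x, hA x, hX x] <;>
      simp [aux_it2, aux_it3] <;>
      simp only [hKx, hK1, hK2, hK3, hWe1, hWe2] <;>
      ring
  · intro x
    constructor <;>
      simp only [Matrix.sub_apply, Matrix.mul_apply, Fin.sum_univ_three, hMD x, hA x, hX x,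
        delta1T, delta1W, delta2T, delta2W] <;>
      simp [aux_it2, aux_it3, aux_it4, aux_it5] <;>
      simp only [hKx, hK1, hK2, hK3, hWe1, hWe2] <;>
      ring
end

section
/- Let n be a natural number, α : (Fin n → ℝ) → Matrix (Fin n) (Fin n) ℝ be C¹, antisymmetric (α^{jk} = −α^{kj}) and satisfying the Jacobi identity Σ_i (∂_i α^{jk})α^{im} + Σ_i (∂_i α^{km})α^{ij} + Σ_i (∂_i α^{mj})α^{ik} = 0 everywhere, and let X, ξ : ℝ → (Fin n → ℝ) be differentiable. With the operators (Aψ)_m := −ψ_m' + Σ_{k,s} (∂_m α^{ks})(X)·ξ_s·ψ_k, (Bψ)^j := Σ_m α^{jm}(X)·ψ_m, (A*η)^j := −(η^j)' − Σ_{i,s} (∂_i α^{js})(X)·ξ_s·η^i, define the constraints F^j(φ) := (X^j)'(φ) + Σ_s α^{js}(X(φ))·ξ_s(φ). Then: (a) if F^j(φ) = 0 for all j and φ, then B(Aψ) = A*(Bψ) for every differentiable ψ : ℝ → (Fin n → ℝ); (b) conversely, if B(Aψ) = A*(Bψ) for every differentiable ψ, and there exists an index m₀ such that the n×n matrix (i,j)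 ↦ (∂_i α^{j m₀})(X(φ)) is invertible for every φ, then F^j(φ) = 0 for all j and φ. -/
open scoped BigOperators

/-- The operator `A` of the Poisson sigma-model linear system:
`(Aψ)_m = −ψ_m' + Σ_{k,s} (∂_m α^{ks})(X)·ξ_s·ψ_k`. -/
noncomputable def opA {n : ℕ} (α : (Fin n → ℝ) → Matrix (Fin n) (Fin n) ℝ)
    (X ξ ψ : ℝ → Fin n → ℝ) : ℝ → Fin n → ℝ :=
  fun φ m => -(deriv (fun t => ψ t m) φ)
    + ∑ k, ∑ s, fderiv ℝ (fun y => α y k s) (X φ) (Pi.single m 1) * ξ φ s * ψ φ k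

/-- The operator `B` of the Poisson sigma-model linear system:
`(Bψ)^j = Σ_m α^{jm}(X)·ψ_m`. -/
noncomputable def opB {n : ℕ} (α : (Fin n → ℝ) → Matrix (Fin n) (Fin n) ℝ)
    (X ψ : ℝ → Fin n → ℝ) : ℝ → Fin n → ℝ :=
  fun φ j => ∑ m, α (X φ) j m * ψ φ m

/-- The dual operator `A*`:
`(A*η)^j = −(η^j)' − Σ_{i,s} (∂_i α^{js})(X)·ξ_s·η^i`. -/
noncomputable def opAstar {n : ℕ} (α : (Fin n → ℝ) → Matrix (Fin n) (Fin n) ℝ)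
    (X ξ η : ℝ → Fin n → ℝ) : ℝ → Fin n → ℝ :=
  fun φ j => -(deriv (fun t => η t j) φ)
    - ∑ i, ∑ s, fderiv ℝ (fun y => α y j s) (X φ) (Pi.single i 1) * ξ φ s * η φ i

/-!
By the product and chain rules, `B(Aψ) − A*(Bψ)` contains no derivative of `ψ`: the terms
`α^{jm}(X) ψ_m'` cancel and what is left is `ψ_m ∂_i α^{jm}(X) ∂_φ X^i` plus terms in `ξ ψ`.
The Jacobi identity, rewritten with antisymmetry as
`Σ_i (α^{ji} ∂_i α^{ms} + ∂_i α^{js} α^{im}) = Σ_i ∂_i α^{jm} α^{is}`, turns the `ξ ψ` terms into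
`ψ_m ∂_i α^{jm}(X) α^{is}(X) ξ_s`, so that `B(Aψ) − A*(Bψ) = ψ_m ∂_i α^{jm}(X) F^i`.
Hence the constraints give consistency; conversely, the constant `ψ = e_{m₀}` gives
`Σ_i F^i ∂_i α^{jm₀}(X) = 0` for all `j`, and the invertibility of that matrix forces `F = 0`.
-/

open Finset

theorem deriv_comp_eq_sum_partial_mul {n : ℕ} {f : (Fin n → ℝ) → ℝ} {X : ℝ → Fin n → ℝ}
    {t : ℝ} (hf : DifferentiableAt ℝ f (X t)) (hX : DifferentiableAt ℝ X t) :
    deriv (fun s => f (X s)) t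
      = ∑ i, fderiv ℝ f (X t) (Pi.single i 1) * deriv (fun s => X s i) t := by
  rw [← Function.comp_def, fderiv_comp_deriv t hf hX,
    deriv_pi fun i => differentiableAt_pi.1 hX i]
  conv_lhs => rw [pi_eq_sum_univ' (fun i => deriv (fun s => X s i) t), map_sum]
  simp only [map_smul, smul_eq_mul, mul_comm]

/-- `g i a b` stands for `∂_i α^{ab}` and `a` for `α` at a point; `hjac` is the Jacobi identity
in the form it takes after antisymmetry. -/
theorem sum_mul_contraction_eq_of_jacobi {R : Type*} [CommRing R] {n : ℕ}
    (a : Fin n → Fin n → R) (g : Fin n → Fin n → Fin n → R) (u p : Fin n → R) (j : Fin n)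
    (hjac : ∀ m s, ∑ i, (a j i * g i m s + g i j s * a i m) = ∑ i, g i j m * a i s) :
    ∑ i, a j i * ∑ m, ∑ s, g i m s * u s * p m + ∑ i, ∑ s, g i j s * u s * ∑ m, a i m * p m
      = ∑ m, p m * ∑ i, g i j m * ∑ s, a i s * u s := by
  calc _ = ∑ m, ∑ s, (∑ i, (a j i * g i m s + g i j s * a i m)) * (u s * p m) := by
        simp only [mul_sum, sum_mul, add_mul, sum_add_distrib]
        congr 1
        · rw [sum_comm]
          refine sum_congr rfl fun m _ => ?_
          rw [sum_comm]
          exact sum_congr rfl fun s _ => sum_congr rfl fun i _ => by ring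
        · rw [sum_comm_cycle]
          refine sum_congr rfl fun m _ => ?_
          rw [sum_comm]
          exact sum_congr rfl fun s _ => sum_congr rfl fun i _ => by ring
    _ = ∑ m, ∑ s, (∑ i, g i j m * a i s) * (u s * p m) := by simp only [hjac]
    _ = _ := by
        simp only [mul_sum, sum_mul]
        refine sum_congr rfl fun m _ => ?_
        rw [sum_comm]
        exact sum_congr rfl fun i _ => sum_congr rfl fun s _ => by ring

structure IsPoissonBivector {n : ℕ} (α : (Fin n → ℝ) → Matrix (Fin n) (Fin n) ℝ) : Prop where
  antisymm : ∀ x j k, α x j k = -α x k j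
  jacobi : ∀ (x : Fin n → ℝ) (j k m : Fin n),
    (∑ i, fderiv ℝ (fun y => α y j k) x (Pi.single i 1) * α x i m)
    + (∑ i, fderiv ℝ (fun y => α y k m) x (Pi.single i 1) * α x i j)
    + (∑ i, fderiv ℝ (fun y => α y m j) x (Pi.single i 1) * α x i k) = 0

noncomputable def constraint {n : ℕ} (α : (Fin n → ℝ) → Matrix (Fin n) (Fin n) ℝ)
    (X ξ : ℝ → Fin n → ℝ) (φ : ℝ) : Fin n → ℝ :=
  fun j => deriv (fun t => X t j) φ + ∑ s, α (X φ) j s * ξ φ s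

section PoissonSigmaModel

variable {n : ℕ} {α : (Fin n → ℝ) → Matrix (Fin n) (Fin n) ℝ}

theorem fderiv_apply_antisymm (hanti : ∀ x j k, α x j k = -α x k j) (x v : Fin n → ℝ)
    (j k : Fin n) :
    fderiv ℝ (fun y => α y j k) x v = -fderiv ℝ (fun y => α y k j) x v := by
  simp only [hanti _ j k, fderiv_fun_neg, neg_apply]

theorem IsPoissonBivector.jacobi' (hα : IsPoissonBivector α) (x : Fin n → ℝ) (j m s : Fin n) :
    ∑ i, (α x j i * fderiv ℝ (fun y => α y m s) x (Pi.single i 1)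
          + fderiv ℝ (fun y => α y j s) x (Pi.single i 1) * α x i m)
      = ∑ i, fderiv ℝ (fun y => α y j m) x (Pi.single i 1) * α x i s := by
  rw [← sub_eq_zero, ← hα.jacobi x j s m, ← sum_sub_distrib, ← sum_add_distrib,
    ← sum_add_distrib]
  refine sum_congr rfl fun i _ => ?_
  rw [hα.antisymm x j i, fderiv_apply_antisymm hα.antisymm _ _ m s,
    fderiv_apply_antisymm hα.antisymm _ _ j m]
  ring

theorem deriv_opB (hα : ∀ j k, ContDiff ℝ 1 (fun x => α x j k)) {X ψ : ℝ → Fin n → ℝ}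
    (hX : Differentiable ℝ X) (hψ : Differentiable ℝ ψ) (φ : ℝ) (j : Fin n) :
    deriv (fun t => opB α X ψ t j) φ
      = ∑ m, (ψ φ m * ∑ i, fderiv ℝ (fun y => α y j m) (X φ) (Pi.single i 1)
              * deriv (fun t => X t i) φ
            + α (X φ) j m * deriv (fun t => ψ t m) φ) := by
  have hαj : ∀ m, Differentiable ℝ (fun y => α y j m) := fun m =>
    (hα j m).differentiable one_ne_zero
  have hψm : ∀ m, DifferentiableAt ℝ (fun t => ψ t m) φ := fun m =>
    differentiableAt_pi.1 (hψ φ) m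
  have hαX : ∀ m, DifferentiableAt ℝ (fun t => α (X t) j m) φ := fun m =>
    (hαj m).differentiableAt.comp φ (hX φ)
  simp only [opB]
  rw [deriv_fun_sum (A := fun m t => α (X t) j m * ψ t m) fun m _ => (hαX m).mul (hψm m)]
  refine sum_congr rfl fun m _ => ?_
  rw [deriv_fun_mul (hαX m) (hψm m),
    deriv_comp_eq_sum_partial_mul (hαj m).differentiableAt (hX φ), mul_comm]

theorem opB_opA_eq_opAstar_opB_add (hα : ∀ j k, ContDiff ℝ 1 (fun x => α x j k))
    (hP : IsPoissonBivector α) {X ψ : ℝ → Fin n → ℝ} (ξ : ℝ → Fin n → ℝ)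
    (hX : Differentiable ℝ X) (hψ : Differentiable ℝ ψ) (φ : ℝ) (j : Fin n) :
    opB α X (opA α X ξ ψ) φ j
      = opAstar α X ξ (opB α X ψ) φ j
        + ∑ m, ψ φ m * ∑ i, fderiv ℝ (fun y => α y j m) (X φ) (Pi.single i 1)
            * constraint α X ξ φ i := by
  have hcontr := sum_mul_contraction_eq_of_jacobi (α (X φ))
    (fun i a b => fderiv ℝ (fun y => α y a b) (X φ) (Pi.single i 1)) (ξ φ) (ψ φ) j
    (hP.jacobi' (X φ) j)
  simp only [opAstar, deriv_opB hα hX hψ φ j]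
  simp only [opA, opB, constraint, mul_add, mul_neg, sum_add_distrib, sum_neg_distrib]
  linear_combination hcontr

theorem vecMul_constraint_eq_zero_of_consistent (hα : ∀ j k, ContDiff ℝ 1 (fun x => α x j k))
    (hP : IsPoissonBivector α) {X : ℝ → Fin n → ℝ} (ξ : ℝ → Fin n → ℝ)
    (hX : Differentiable ℝ X) (m : Fin n)
    (hcons : opB α X (opA α X ξ fun _ => Pi.single m 1)
      = opAstar α X ξ (opB α X fun _ => Pi.single m 1)) (φ : ℝ) :
    Matrix.vecMul (constraint α X ξ φ)
      (Matrix.of fun i j => fderiv ℝ (fun y => α y j m) (X φ) (Pi.single i 1)) = 0 := by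
  funext j
  have h := opB_opA_eq_opAstar_opB_add hα hP ξ hX (differentiable_const (Pi.single m 1)) φ j
  rw [congrFun (congrFun hcons φ) j, left_eq_add] at h
  simpa [Matrix.vecMul, dotProduct, Pi.single_apply, mul_comm] using h

end PoissonSigmaModel

theorem poisson_sigma_constraints_iff_consistency_general
    (n : ℕ) (α : (Fin n → ℝ) → Matrix (Fin n) (Fin n) ℝ)
    (hα : ∀ j k, ContDiff ℝ 1 (fun x => α x j k))
    (hanti : ∀ (x : Fin n → ℝ) (j k : Fin n), α x j k = -α x k j)
    (hJacobi : ∀ (x : Fin n → ℝ) (j k m : Fin n),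
      (∑ i, fderiv ℝ (fun y => α y j k) x (Pi.single i 1) * α x i m)
      + (∑ i, fderiv ℝ (fun y => α y k m) x (Pi.single i 1) * α x i j)
      + (∑ i, fderiv ℝ (fun y => α y m j) x (Pi.single i 1) * α x i k) = 0)
    (X ξ : ℝ → Fin n → ℝ) (hX : Differentiable ℝ X) :
    ((∀ (j : Fin n) (φ : ℝ),
        deriv (fun t => X t j) φ + (∑ s, α (X φ) j s * ξ φ s) = 0) →
      ∀ ψ : ℝ → Fin n → ℝ, Differentiable ℝ ψ →
        opB α X (opA α X ξ ψ) = opAstar α X ξ (opB α X ψ))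
    ∧ ((∀ ψ : ℝ → Fin n → ℝ, Differentiable ℝ ψ →
        opB α X (opA α X ξ ψ) = opAstar α X ξ (opB α X ψ)) →
      (∃ m₀ : Fin n, ∀ φ : ℝ,
        IsUnit (Matrix.of fun i j : Fin n =>
          fderiv ℝ (fun y => α y j m₀) (X φ) (Pi.single i 1))) →
      ∀ (j : Fin n) (φ : ℝ),
        deriv (fun t => X t j) φ + (∑ s, α (X φ) j s * ξ φ s) = 0) := by
  have hP : IsPoissonBivector α := ⟨hanti, hJacobi⟩
  refine ⟨fun hF ψ hψ => ?_, fun hcons ⟨m₀, hM⟩ j φ => ?_⟩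
  · funext φ j
    have hF₀ : constraint α X ξ φ = 0 := funext (hF · φ)
    simp [opB_opA_eq_opAstar_opB_add hα hP ξ hX hψ φ j, hF₀]
  · have h := vecMul_constraint_eq_zero_of_consistent hα hP ξ hX m₀
      (hcons _ (differentiable_const _)) φ
    exact congrFun
      (Matrix.vecMul_injective_of_isUnit (hM φ) (h.trans (Matrix.zero_vecMul _).symm)) j

/-- Lemma 5.1 of the paper: in the Poisson sigma-model, the first-class
constraints `F^j = ∂_φ X^j + α^{jk}(X) ξ_k = 0` are exactly the consistency
conditions `B∘A = A*∘B` of the linear system, the converse direction needing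
the non-degeneracy of the matrix `∂_i α^{j m₀}(X)` for some `m₀`. -/
theorem poisson_sigma_constraints_iff_consistency
    (n : ℕ) (α : (Fin n → ℝ) → Matrix (Fin n) (Fin n) ℝ)
    (hα : ∀ j k, ContDiff ℝ 1 (fun x => α x j k))
    (hanti : ∀ (x : Fin n → ℝ) (j k : Fin n), α x j k = -α x k j)
    (hJacobi : ∀ (x : Fin n → ℝ) (j k m : Fin n),
      (∑ i, fderiv ℝ (fun y => α y j k) x (Pi.single i 1) * α x i m)
      + (∑ i, fderiv ℝ (fun y => α y k m) x (Pi.single i 1) * α x i j)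
      + (∑ i, fderiv ℝ (fun y => α y m j) x (Pi.single i 1) * α x i k) = 0)
    (X ξ : ℝ → Fin n → ℝ) (hX : Differentiable ℝ X) (hξ : Differentiable ℝ ξ) :
    ((∀ (j : Fin n) (φ : ℝ),
        deriv (fun t => X t j) φ + (∑ s, α (X φ) j s * ξ φ s) = 0) →
      ∀ ψ : ℝ → Fin n → ℝ, Differentiable ℝ ψ →
        opB α X (opA α X ξ ψ) = opAstar α X ξ (opB α X ψ))
    ∧ ((∀ ψ : ℝ → Fin n → ℝ, Differentiable ℝ ψ →
        opB α X (opA α X ξ ψ) = opAstar α X ξ (opB α X ψ)) →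
      (∃ m₀ : Fin n, ∀ φ : ℝ,
        IsUnit (Matrix.of fun i j : Fin n =>
          fderiv ℝ (fun y => α y j m₀) (X φ) (Pi.single i 1))) →
      ∀ (j : Fin n) (φ : ℝ),
        deriv (fun t => X t j) φ + (∑ s, α (X φ) j s * ξ φ s) = 0) :=
  poisson_sigma_constraints_iff_consistency_general n α hα hanti hJacobi X ξ hX
end
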